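/- Let U : ℝ^n × [0,1] → ℝ be continuously differentiable, let Z : [0,1] → ℝ be differentiable with Z(t) > 0, and suppose the velocity field b : ℝ^n × [0,1] → ℝ^n (continuously differentiable) satisfies the inhomogeneous transport equation ∂_t U(x,t) + b(x,t)·∇U(x,t) − ∇·b(x,t) + (log Z)'(t) = 0 for all (x,t). Then the Jarzynski work rate is spatially constant: for every (x,t), ∇·b(x,t) − ∇U(x,t)·b(x,t) − ∂_t U(x,t) = (log Z)'(t), a quantity independent of x. Consequently, along any trajectory X_t of the annealed dynamics, the accumulated weight A_t = ∫₀ᵗ [∇·b(X_s,s) − ∇U(X_s,s)·b(X_s,s) − ∂_s U(X_s,s)] ds equals log Z(t) − log Z(0), the same deterministic value for every trajectory. -/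

import Mathlib

lemma aux_fst {E : Type*} [NormedAddCommGroup E] [NormedSpace ℝ E]
    (F : E × ℝ → ℝ) (hF : ContDiff ℝ 1 F) (x : E) (t : ℝ) (v : E) :
    fderiv ℝ (fun y => F (y, t)) x v = fderiv ℝ F (x, t) (v, 0) := by
  have h1 : HasFDerivAt (fun y : E => (y, t)) (ContinuousLinearMap.inl ℝ E ℝ) x :=
    hasFDerivAt_prodMk_left x t
  have h2 := (hF.differentiable one_ne_zero (x, t)).hasFDerivAt
  have h3 : HasFDerivAt (fun y => F (y, t)) ((fderiv ℝ F (x, t)).comp (ContinuousLinearMap.inl ℝ E ℝ)) x := h2.comp x h1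
  rw [h3.fderiv]
  rfl

lemma aux_snd {E : Type*} [NormedAddCommGroup E] [NormedSpace ℝ E]
    (F : E × ℝ → ℝ) (hF : ContDiff ℝ 1 F) (x : E) (t : ℝ) :
    deriv (fun s => F (x, s)) t = fderiv ℝ F (x, t) (0, 1) := by
  have h1 : HasDerivAt (fun s : ℝ => (x, s)) ((0 : E), (1 : ℝ)) t :=
    (hasDerivAt_const t x).prodMk (hasDerivAt_id t)
  have h2 := (hF.differentiable one_ne_zero (x, t)).hasFDerivAt
  exact (h2.comp_hasDerivAt t h1).deriv

lemma aux_cont {E : Type*} [NormedAddCommGroup E] [NormedSpace ℝ E]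
    (F : E × ℝ → ℝ) (hF : ContDiff ℝ 1 F) (x : E) (w : E × ℝ) :
    Continuous (fun s : ℝ => fderiv ℝ F (x, s) w) := by
  have h1 : Continuous (fun s : ℝ => fderiv ℝ F (x, s)) :=
    (hF.continuous_fderiv one_ne_zero).comp (continuous_const.prodMk continuous_id)
  exact h1.clm_apply continuous_const

/-- zero-variance property of NETS reweighting: if the velocity field
`b` solves the inhomogeneous transport equation
`∂_t U + b·∇U − ∇·b + (log Z)' = 0` on `ℝ^n × [0,1]`, then the Jarzynski work rate
`∇·b − ∇U·b − ∂_t U` is spatially constant and equals `(log Z)'(t)`; consequently,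
along any trajectory `X`, the accumulated weight
`A_t = ∫₀ᵗ [∇·b(X_s,s) − ∇U(X_s,s)·b(X_s,s) − ∂_s U(X_s,s)] ds` equals
`log Z(t) − log Z(0)`, the same deterministic value for every trajectory. -/
theorem stmt_15 (n : ℕ)
    (U : (Fin n → ℝ) → ℝ → ℝ) (b : (Fin n → ℝ) → ℝ → (Fin n → ℝ))
    (hU : ContDiff ℝ 1 (fun q : (Fin n → ℝ) × ℝ => U q.1 q.2))
    (hb : ContDiff ℝ 1 (fun q : (Fin n → ℝ) × ℝ => b q.1 q.2))
    (Z : ℝ → ℝ)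
    (hZ : ∀ t ∈ Set.Icc (0 : ℝ) 1, DifferentiableAt ℝ Z t)
    (hZpos : ∀ t ∈ Set.Icc (0 : ℝ) 1, 0 < Z t)
    (htransport : ∀ (x : Fin n → ℝ), ∀ t ∈ Set.Icc (0 : ℝ) 1,
      deriv (fun s => U x s) t
        + ∑ i, b x t i * fderiv ℝ (fun y => U y t) x (Pi.single i 1)
        - ∑ i, fderiv ℝ (fun y => b y t i) x (Pi.single i 1)
        + deriv (fun s => Real.log (Z s)) t = 0) :
    (∀ (x : Fin n → ℝ), ∀ t ∈ Set.Icc (0 : ℝ) 1,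
      ∑ i, fderiv ℝ (fun y => b y t i) x (Pi.single i 1)
        - ∑ i, fderiv ℝ (fun y => U y t) x (Pi.single i 1) * b x t i
        - deriv (fun s => U x s) t
      = deriv (fun s => Real.log (Z s)) t) ∧
    (∀ (X : ℝ → (Fin n → ℝ)), ∀ t ∈ Set.Icc (0 : ℝ) 1,
      (∫ s in (0 : ℝ)..t,
        (∑ i, fderiv ℝ (fun y => b y s i) (X s) (Pi.single i 1)
          - ∑ i, fderiv ℝ (fun y => U y s) (X s) (Pi.single i 1) * b (X s) s i
          - deriv (fun r => U (X s) r) s))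
      = Real.log (Z t) - Real.log (Z 0)) := by
  have key : ∀ (x : Fin n → ℝ), ∀ t ∈ Set.Icc (0 : ℝ) 1,
      ∑ i, fderiv ℝ (fun y => b y t i) x (Pi.single i 1)
        - ∑ i, fderiv ℝ (fun y => U y t) x (Pi.single i 1) * b x t i
        - deriv (fun s => U x s) t
      = deriv (fun s => Real.log (Z s)) t := by
    intro x t ht
    have h := htransport x t ht
    have hsum : ∑ i, b x t i * fderiv ℝ (fun y => U y t) x (Pi.single i 1)
        = ∑ i, fderiv ℝ (fun y => U y t) x (Pi.single i 1) * b x t i :=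
      Finset.sum_congr rfl (fun i _ => mul_comm _ _)
    rw [hsum] at h
    linarith
  refine ⟨key, ?_⟩
  intro X t ht
  -- continuity of deriv (log ∘ Z) on [0,1]
  set FU : (Fin n → ℝ) × ℝ → ℝ := fun q => U q.1 q.2 with hFU
  have hbi : ∀ i : Fin n, ContDiff ℝ 1 (fun q : (Fin n → ℝ) × ℝ => b q.1 q.2 i) := by
    intro i
    exact (ContinuousLinearMap.proj i : ((Fin n → ℝ) →L[ℝ] ℝ)).contDiff.comp hb
  have hG : Continuous (fun s : ℝ =>
      ∑ i, fderiv ℝ (fun y => b y s i) (0 : Fin n → ℝ) (Pi.single i 1)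
        - ∑ i, fderiv ℝ (fun y => U y s) (0 : Fin n → ℝ) (Pi.single i 1) * b 0 s i
        - deriv (fun r => U (0 : Fin n → ℝ) r) s) := by
    have h1 : Continuous (fun s : ℝ =>
        ∑ i, fderiv ℝ (fun y => b y s i) (0 : Fin n → ℝ) (Pi.single i 1)) := by
      apply continuous_finset_sum
      intro i _
      have := aux_cont (fun q : (Fin n → ℝ) × ℝ => b q.1 q.2 i) (hbi i) 0 (Pi.single i 1, 0)
      convert this using 2 with s
      exact aux_fst (fun q : (Fin n → ℝ) × ℝ => b q.1 q.2 i) (hbi i) 0 s (Pi.single i 1)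
    have h2 : Continuous (fun s : ℝ =>
        ∑ i, fderiv ℝ (fun y => U y s) (0 : Fin n → ℝ) (Pi.single i 1) * b 0 s i) := by
      apply continuous_finset_sum
      intro i _
      apply Continuous.mul
      · have := aux_cont FU hU 0 (Pi.single i 1, 0)
        convert this using 2 with s
        exact aux_fst FU hU 0 s (Pi.single i 1)
      · exact ((continuous_apply i).comp hb.continuous).comp
          (continuous_const.prodMk continuous_id)
    have h3 : Continuous (fun s : ℝ => deriv (fun r => U (0 : Fin n → ℝ) r) s) := by
      have := aux_cont FU hU 0 (0, 1)
      convert this using 2 with s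
      exact aux_snd FU hU 0 s
    exact (h1.sub h2).sub h3
  have hfeq : Set.EqOn (fun s => deriv (fun r => Real.log (Z r)) s)
      (fun s : ℝ =>
        ∑ i, fderiv ℝ (fun y => b y s i) (0 : Fin n → ℝ) (Pi.single i 1)
          - ∑ i, fderiv ℝ (fun y => U y s) (0 : Fin n → ℝ) (Pi.single i 1) * b 0 s i
          - deriv (fun r => U (0 : Fin n → ℝ) r) s) (Set.Icc 0 1) :=
    fun s hs => (key 0 s hs).symm
  have hfc : ContinuousOn (fun s => deriv (fun r => Real.log (Z r)) s) (Set.Icc 0 1) :=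
    (hG.continuousOn).congr hfeq
  have huIcc : Set.uIcc (0 : ℝ) t = Set.Icc 0 t := Set.uIcc_of_le ht.1
  have hsub : Set.Icc (0 : ℝ) t ⊆ Set.Icc 0 1 := Set.Icc_subset_Icc le_rfl ht.2
  have hint : IntervalIntegrable (fun s => deriv (fun r => Real.log (Z r)) s)
      MeasureTheory.volume 0 t := by
    apply ContinuousOn.intervalIntegrable
    rw [huIcc]
    exact hfc.mono hsub
  have hFTC : (∫ s in (0:ℝ)..t, deriv (fun r => Real.log (Z r)) s)
      = Real.log (Z t) - Real.log (Z 0) := by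
    apply intervalIntegral.integral_eq_sub_of_hasDerivAt
    · intro s hs
      rw [huIcc] at hs
      have hs' := hsub hs
      exact (((hZ s hs').log (ne_of_gt (hZpos s hs')))).hasDerivAt
    · exact hint
  rw [← hFTC]
  apply intervalIntegral.integral_congr
  intro s hs
  rw [huIcc] at hs
  exact key (X s) s (hsub hs)
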